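/- Let G be a finite chordal graph, let T be a clique tree of G, and let X be a nonempty set of vertices of G such that the induced subgraph G[X] is connected. Then the set of maximal cliques K of G with K ∩ X ≠ ∅ induces a connected subgraph (a subtree) of T. -/

import Mathlib

/-- A vertex is *simplicial* if its neighbors are pairwise adjacent. -/
def IsSimplicial {V : Type*} (G : SimpleGraph V) (v : V) : Prop :=
  ∀ x y, G.Adj v x → G.Adj v y → x ≠ y → G.Adj x y

/-- A graph is *chordal* if it has no induced cycle of length at least 4,
i.e., no cycle graph on `n ≥ 4` vertices embeds in it as an induced subgraph. -/
def IsChordal {V : Type*} (G : SimpleGraph V) : Prop :=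
  ∀ n : ℕ, 4 ≤ n → IsEmpty (SimpleGraph.cycleGraph n ↪g G)

/-- A *clique tree* of `G` is a tree `T` on the maximal cliques of `G` such that,
for every vertex `v`, the maximal cliques containing `v` induce a connected
subgraph of `T`. -/
def IsCliqueTree {V : Type*} (G : SimpleGraph V)
    (T : SimpleGraph {K : Finset V // Maximal G.IsClique (K : Set V)}) : Prop :=
  T.IsTree ∧ ∀ v : V, (T.induce {K | v ∈ K.1}).Connected

/-!
The maximal cliques through a single vertex form a subtree of `T`, and the subtrees of two
adjacent vertices overlap because an edge lies in some maximal clique. Gluing these subtrees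
along the walks of `G[X]` gives the claim.
-/

namespace SimpleGraph

variable {V W ι : Type*}

theorem exists_maximal_isClique_superset [Finite V] {G : SimpleGraph V} {s : Set V}
    (hs : G.IsClique s) : ∃ K : Finset V, s ⊆ K ∧ Maximal G.IsClique (K : Set V) := by
  obtain ⟨t, hst, ht⟩ := Finite.exists_le_maximal hs
  exact ⟨(Set.toFinite t).toFinset, by simpa using hst, by simpa using ht⟩

theorem Adj.exists_maximal_isClique_mem [Finite V] {G : SimpleGraph V} {u v : V}
    (huv : G.Adj u v) : ∃ K : Finset V, u ∈ K ∧ v ∈ K ∧ Maximal G.IsClique (K : Set V) := by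
  obtain ⟨K, hK, hmax⟩ := exists_maximal_isClique_superset (isClique_pair.2 fun _ => huv)
  exact ⟨K, hK (Set.mem_insert u _), hK (Set.mem_insert_of_mem u rfl), hmax⟩

theorem induce_iUnion_connected {H : SimpleGraph ι} (hH : H.Connected) (T : SimpleGraph W)
    {S : ι → Set W} (hS : ∀ i, (T.induce (S i)).Connected)
    (hS_adj : ∀ i j, H.Adj i j → (S i ∩ S j).Nonempty) :
    (T.induce (⋃ i, S i)).Connected := by
  have reach_within : ∀ i (a b : S i),
      (T.induce (⋃ i, S i)).Reachable ⟨a, Set.mem_iUnion_of_mem i a.2⟩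
        ⟨b, Set.mem_iUnion_of_mem i b.2⟩ := fun i a b =>
    ((hS i).preconnected a b).map (induceHomOfLE T (Set.subset_iUnion S i)).toHom
  have reach_along : ∀ {i j} (_ : H.Walk i j) (a : S i) (b : S j),
      (T.induce (⋃ i, S i)).Reachable ⟨a, Set.mem_iUnion_of_mem i a.2⟩
        ⟨b, Set.mem_iUnion_of_mem j b.2⟩ := by
    intro i j w
    induction w with
    | nil => exact reach_within _
    | @cons i k j hik _ ih =>
      intro a b
      obtain ⟨c, hci, hck⟩ := hS_adj i k hik
      exact (reach_within i a ⟨c, hci⟩).trans (ih ⟨c, hck⟩ b)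
  rw [connected_iff]
  refine ⟨?_, ?_⟩
  · rintro ⟨a, ha⟩ ⟨b, hb⟩
    obtain ⟨i, hai⟩ := Set.mem_iUnion.1 ha
    obtain ⟨j, hbj⟩ := Set.mem_iUnion.1 hb
    exact reach_along (hH.preconnected i j).some ⟨a, hai⟩ ⟨b, hbj⟩
  · obtain ⟨i⟩ := hH.nonempty
    obtain ⟨⟨a, ha⟩⟩ := (hS i).nonempty
    exact ⟨⟨a, Set.mem_iUnion_of_mem i ha⟩⟩

end SimpleGraph

theorem cliques_meeting_connected_set_induce_subtree_general {V : Type*} [Fintype V]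
    (G : SimpleGraph V)
    (T : SimpleGraph {K : Finset V // Maximal G.IsClique (K : Set V)})
    (hT : IsCliqueTree G T)
    (X : Set V) (hXconn : (G.induce X).Connected) :
    (T.induce {K | ∃ x ∈ X, x ∈ K.1}).Connected := by
  have h_overlap : ∀ x y : X, (G.induce X).Adj x y →
      ∃ K : {K : Finset V // Maximal G.IsClique (K : Set V)}, x.1 ∈ K.1 ∧ y.1 ∈ K.1 := by
    intro x y hxy
    obtain ⟨K, hxK, hyK, hK⟩ := (SimpleGraph.comap_adj.1 hxy).exists_maximal_isClique_mem
    exact ⟨⟨K, hK⟩, hxK, hyK⟩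
  convert SimpleGraph.induce_iUnion_connected hXconn T (fun x : X => hT.2 x) h_overlap using 2 <;>
    simp [Set.ext_iff]

/-- If `G` is a finite chordal graph, `T` a clique tree of `G`, and
`X` a nonempty set of vertices with `G[X]` connected, then the maximal cliques meeting
`X` induce a connected subgraph (a subtree) of `T`. -/
theorem cliques_meeting_connected_set_induce_subtree {V : Type*} [Fintype V]
    (G : SimpleGraph V) (hG : IsChordal G)
    (T : SimpleGraph {K : Finset V // Maximal G.IsClique (K : Set V)})
    (hT : IsCliqueTree G T)
    (X : Set V) (hXne : X.Nonempty) (hXconn : (G.induce X).Connected) :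
    (T.induce {K | ∃ x ∈ X, x ∈ K.1}).Connected :=
  cliques_meeting_connected_set_induce_subtree_general G T hT X hXconn
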